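/- For every odd integer n ≥ 1 and every integer k ≥ 1, the recursion I_{n,k} = −(2k(2k+1)/n²)·I_{n,k−1} + δ(n)·((2k+1)/n²)·(π/2)^{2k} holds. -/

import Mathlib

/-!
Integrating `t^{m+2} sin(ct)` by parts twice reduces it to `t^m sin(ct)` plus boundary terms.
For odd `n = 2l+1` the boundary terms at `π/2` simplify because `cos(nπ/2) = 0` and
`sin(nπ/2) = (-1)^l = δ(n)`, and those at `0` vanish.
-/

open Real MeasureTheory

/-- `I_{n,k} = ∫₀^{π/2} t^{2k+1} sin(nt) dt`. -/
noncomputable def I (n k : ℕ) : ℝ :=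
  ∫ t in (0:ℝ)..(π / 2), t ^ (2 * k + 1) * Real.sin ((n : ℝ) * t)

/-- `δ(n) = 1` if `n ≡ 1 (mod 4)`, `δ(n) = -1` if `n ≡ 3 (mod 4)`. -/
noncomputable def delta (n : ℕ) : ℝ := if n % 4 = 1 then 1 else -1

lemma hasDerivAt_pow_mul_sin_antideriv {c : ℝ} (hc : c ≠ 0) (m : ℕ) (t : ℝ) :
    HasDerivAt
      (fun t => -t ^ (m + 2) * cos (c * t) / c + (m + 2) * t ^ (m + 1) * sin (c * t) / c ^ 2)
      (t ^ (m + 2) * sin (c * t) + (m + 2) * (m + 1) / c ^ 2 * (t ^ m * sin (c * t))) t := by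
  have hct : HasDerivAt (fun t => c * t) c t := by simpa using (hasDerivAt_id t).const_mul c
  have hcos := (hasDerivAt_cos (c * t)).comp t hct
  have hsin := (hasDerivAt_sin (c * t)).comp t hct
  have hp2 := hasDerivAt_pow (m + 2) t
  have hp1 := hasDerivAt_pow (m + 1) t
  refine (((hp2.neg.mul hcos).div_const c).add
    (((hp1.const_mul (m + 2 : ℝ)).mul hsin).div_const (c ^ 2))).congr_deriv ?_
  simp only [Pi.neg_apply, Function.comp_apply, Nat.add_one_sub_one,
    show m + 2 - 1 = m + 1 from rfl, Nat.cast_add, Nat.cast_ofNat, Nat.cast_one]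
  field_simp
  ring

theorem integral_pow_add_two_mul_sin {c : ℝ} (hc : c ≠ 0) (m : ℕ) (a b : ℝ) :
    ∫ t in a..b, t ^ (m + 2) * sin (c * t) =
      (-b ^ (m + 2) * cos (c * b) / c + (m + 2) * b ^ (m + 1) * sin (c * b) / c ^ 2)
      - (-a ^ (m + 2) * cos (c * a) / c + (m + 2) * a ^ (m + 1) * sin (c * a) / c ^ 2)
      - (m + 2) * (m + 1) / c ^ 2 * ∫ t in a..b, t ^ m * sin (c * t) := by
  have hint : ∀ k : ℕ, IntervalIntegrable (fun t => t ^ k * sin (c * t)) volume a b :=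
    fun k => (by fun_prop : Continuous fun t => t ^ k * sin (c * t)).intervalIntegrable a b
  have hFTC := intervalIntegral.integral_eq_sub_of_hasDerivAt
    (fun t _ => hasDerivAt_pow_mul_sin_antideriv hc m t)
    ((hint _).add ((hint m).const_mul _))
  rw [intervalIntegral.integral_add (hint _) ((hint m).const_mul _),
    intervalIntegral.integral_const_mul] at hFTC
  linarith

lemma natCast_two_mul_add_one_mul_pi_div_two (l : ℕ) :
    ((2 * l + 1 : ℕ) : ℝ) * (π / 2) = π / 2 + l * π := by
  push_cast; ring

lemma cos_odd_mul_pi_div_two (l : ℕ) : cos ((2 * l + 1 : ℕ) * (π / 2)) = 0 := by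
  rw [natCast_two_mul_add_one_mul_pi_div_two, cos_add_nat_mul_pi, cos_pi_div_two, mul_zero]

lemma sin_odd_mul_pi_div_two (l : ℕ) : sin ((2 * l + 1 : ℕ) * (π / 2)) = (-1) ^ l := by
  rw [natCast_two_mul_add_one_mul_pi_div_two, sin_add_nat_mul_pi, sin_pi_div_two, mul_one]

lemma delta_two_mul_add_one (l : ℕ) : delta (2 * l + 1) = (-1) ^ l := by
  rcases Nat.even_or_odd l with ⟨r, rfl⟩ | ⟨r, rfl⟩
  · rw [delta, if_pos (by omega), Even.neg_one_pow ⟨r, rfl⟩]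
  · rw [delta, if_neg (by omega), Odd.neg_one_pow ⟨r, rfl⟩]

theorem I_recursion_general (n k : ℕ) (hno : Odd n) (hk : 1 ≤ k) :
    I n k = -((2 * (k : ℝ) * (2 * (k : ℝ) + 1)) / (n : ℝ) ^ 2) * I n (k - 1)
      + delta n * ((2 * (k : ℝ) + 1) / (n : ℝ) ^ 2) * (π / 2) ^ (2 * k) := by
  obtain ⟨j, rfl⟩ : ∃ j, k = j + 1 := ⟨k - 1, by omega⟩
  obtain ⟨l, rfl⟩ := hno
  have hn : ((2 * l + 1 : ℕ) : ℝ) ≠ 0 := by positivity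
  have hred := integral_pow_add_two_mul_sin hn (2 * j + 1) 0 (π / 2)
  rw [cos_odd_mul_pi_div_two, sin_odd_mul_pi_div_two] at hred
  rw [I, I, delta_two_mul_add_one, Nat.add_sub_cancel,
    show 2 * (j + 1) + 1 = 2 * j + 1 + 2 by ring, hred]
  push_cast
  field_simp
  ring

/-- For odd `n ≥ 1` and `k ≥ 1`:
`I_{n,k} = -(2k(2k+1)/n²) I_{n,k-1} + δ(n) ((2k+1)/n²) (π/2)^{2k}`. -/
theorem I_recursion (n k : ℕ) (hn : 1 ≤ n) (hno : Odd n) (hk : 1 ≤ k) :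
    I n k = -((2 * (k : ℝ) * (2 * (k : ℝ) + 1)) / (n : ℝ) ^ 2) * I n (k - 1)
      + delta n * ((2 * (k : ℝ) + 1) / (n : ℝ) ^ 2) * (π / 2) ^ (2 * k) :=
  I_recursion_general n k hno hk
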